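/- arXiv:math/0106123 — 4 statements merged into one kernel-verified Lean document; each statement's English description precedes it below -/
import Mathlib

section
/- For every integer L ≥ 0, the numbers b_L(n) satisfy b_L(0) = 1 and the recurrence b_L(n+1) = ∑_{k=0}^{n} C(n,k) · C(n+1,k)^L · b_L(k) for all n ≥ 0, where C(m,j) denotes the binomial coefficient. -/
open PowerSeries Finset

/-- The series `₀F_L(1,…,1;z) − 1 = ∑_{k≥1} z^k/(k!)^{L+1}` over `ℚ`. -/
noncomputable def hypFsub1 (L : ℕ) : PowerSeries ℚ :=
  PowerSeries.mk fun k => if k = 0 then 0 else 1 / (k.factorial : ℚ) ^ (L + 1)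

/-- The exponential `exp f = ∑_{l≥0} f^l / l!` of a power series `f` with zero
constant term (for such `f`, `coeff n (f^l) = 0` for `l > n`, so the finite sum
below is the full exponential series). -/
noncomputable def expPS (f : PowerSeries ℚ) : PowerSeries ℚ :=
  PowerSeries.mk fun n =>
    ∑ l ∈ Finset.range (n + 1), PowerSeries.coeff n (f ^ l) / (l.factorial : ℚ)

/-- `b_L(n) = (n!)^{L+1} · [z^n] exp(₀F_L(z) − 1)`. -/
noncomputable def bL (L n : ℕ) : ℚ :=
  (n.factorial : ℚ) ^ (L + 1) * PowerSeries.coeff n (expPS (hypFsub1 L))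

/-- `S_L(n,l) = ((n!)^{L+1}/l!) · [z^n] (₀F_L(z) − 1)^l`, the generalized
Stirling numbers of the second kind of type `L`. -/
noncomputable def SL (L n l : ℕ) : ℚ :=
  (n.factorial : ℚ) ^ (L + 1) / (l.factorial : ℚ) *
    PowerSeries.coeff n (hypFsub1 L ^ l)

/-- The series `∑_{k≥p+1} z^k/(k!)^{L+1}` over `ℚ`. -/
noncomputable def hypFtail (L p : ℕ) : PowerSeries ℚ :=
  PowerSeries.mk fun k => if k ≤ p then 0 else 1 / (k.factorial : ℚ) ^ (L + 1)

/-- `b_L(p,n) = (n!)^{L+1} · [z^n] exp(∑_{k≥p+1} z^k/(k!)^{L+1})`. -/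
noncomputable def bLp (L p n : ℕ) : ℚ :=
  (n.factorial : ℚ) ^ (L + 1) * PowerSeries.coeff n (expPS (hypFtail L p))

/-!
Write `F = ₀F_L − 1` and `E = exp F`. Since `F` has no constant term, `[z^n] E` only sees
the terms `F^l / l!` with `l ≤ n`, and differentiating the truncation `∑_{l ≤ m+1} F^l / l!`
gives `F' · ∑_{l ≤ m} F^l / l!`; hence `E' = F' E`. Reading off `[z^n]` gives
`(n+1) [z^{n+1}] E = ∑_k (n-k+1)/((n-k+1)!)^{L+1} · [z^k] E`, and multiplying by
`((n+1)!)^{L+1}` the factorials regroup as `(n+1) C(n,k) C(n+1,k)^L k!^{L+1}` because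
`(n-k+1) C(n+1,k) = (n+1) C(n,k)`.
-/

namespace PowerSeries

noncomputable def expTrunc (f : ℚ⟦X⟧) (m : ℕ) : ℚ⟦X⟧ :=
  ∑ l ∈ range (m + 1), (l.factorial : ℚ)⁻¹ • f ^ l

theorem coeff_expPS_eq_coeff_expTrunc {f : ℚ⟦X⟧} (hf : constantCoeff f = 0)
    {n m : ℕ} (h : n ≤ m) : coeff n (expPS f) = coeff n (expTrunc f m) := by
  simp only [expPS, expTrunc, coeff_mk, map_sum, map_smul, smul_eq_mul, div_eq_inv_mul]
  refine sum_subset (range_subset_range.mpr (by omega)) fun l _ hl => ?_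
  have hnl : (n : ℕ∞) < (f ^ l).order :=
    lt_of_lt_of_le (by rw [mem_range] at hl; exact_mod_cast (by omega : n < l))
      (le_order_pow_of_constantCoeff_eq_zero l hf)
  rw [coeff_of_lt_order n hnl, mul_zero]

theorem derivative_expTrunc_succ (f : ℚ⟦X⟧) (m : ℕ) :
    d⁄dX ℚ (expTrunc f (m + 1)) = d⁄dX ℚ f * expTrunc f m := by
  rw [expTrunc, sum_range_succ', expTrunc, mul_sum]
  simp only [map_add, map_sum, Derivation.map_smul, pow_zero, Derivation.map_one_eq_zero,
    smul_zero, add_zero, Derivation.leibniz_pow, Nat.add_sub_cancel]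
  refine sum_congr rfl fun l _ => ?_
  have hcoeff : ((l + 1).factorial : ℚ)⁻¹ * (l + 1 : ℕ) = (l.factorial : ℚ)⁻¹ := by
    rw [Nat.factorial_succ]
    push_cast
    field_simp
  rw [← Nat.cast_smul_eq_nsmul ℚ, smul_smul, hcoeff, smul_eq_mul, mul_smul_comm, mul_comm]

theorem derivative_expPS {f : ℚ⟦X⟧} (hf : constantCoeff f = 0) :
    d⁄dX ℚ (expPS f) = d⁄dX ℚ f * expPS f := by
  ext n
  rw [coeff_derivative, coeff_expPS_eq_coeff_expTrunc hf le_rfl, ← coeff_derivative,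
    derivative_expTrunc_succ, coeff_mul, coeff_mul]
  refine sum_congr rfl fun p hp => ?_
  rw [coeff_expPS_eq_coeff_expTrunc hf (HasAntidiagonal.antidiagonal.snd_le hp)]

theorem coeff_mul_eq_sum_range {R : Type*} [Semiring R] (f g : R⟦X⟧) (n : ℕ) :
    coeff n (f * g) = ∑ k ∈ range (n + 1), coeff (n - k) f * coeff k g := by
  rw [coeff_mul, ← Nat.sum_antidiagonal_swap]
  exact Nat.sum_antidiagonal_eq_sum_range_succ (fun i j => coeff j f * coeff i g) n

end PowerSeries

theorem constantCoeff_hypFsub1 (L : ℕ) : constantCoeff (hypFsub1 L) = 0 := by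
  rw [← coeff_zero_eq_constantCoeff_apply, hypFsub1, coeff_mk, if_pos rfl]

theorem coeff_derivative_hypFsub1 (L n : ℕ) :
    coeff n (d⁄dX ℚ (hypFsub1 L)) = (n + 1 : ℕ) / ((n + 1).factorial : ℚ) ^ (L + 1) := by
  rw [coeff_derivative, hypFsub1, coeff_mk, if_neg n.succ_ne_zero]
  push_cast
  ring

theorem factorial_pow_mul_div_eq_choose {K : Type*} [Field K] [CharZero K] (L : ℕ) {n k : ℕ}
    (hk : k ≤ n) :
    ((n + 1).factorial : K) ^ (L + 1) * (n - k + 1 : ℕ) / ((n - k + 1).factorial : K) ^ (L + 1)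
      = (n + 1) * (n.choose k : K) * ((n + 1).choose k : K) ^ L * (k.factorial : K) ^ (L + 1) := by
  have hsub : n + 1 - k = n - k + 1 := by omega
  have hfac : ((n + 1).factorial : K) = (n + 1).choose k * k.factorial * (n - k + 1).factorial := by
    exact_mod_cast (hsub ▸ Nat.choose_mul_factorial_mul_factorial (by omega : k ≤ n + 1)).symm
  have hsucc : ((n : K) + 1) * n.choose k = (n + 1).choose k * (n - k + 1 : ℕ) := by
    rw [mul_comm]
    exact_mod_cast hsub ▸ Nat.choose_mul_succ_eq n k
  have hj0 : ((n - k + 1).factorial : K) ≠ 0 := Nat.cast_ne_zero.mpr (Nat.factorial_ne_zero _)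
  rw [hfac, hsucc]
  field_simp
  ring

/-- `b_L(0) = 1` and
`b_L(n+1) = ∑_{k=0}^{n} C(n,k) · C(n+1,k)^L · b_L(k)`. -/
theorem stmt_0 (L : ℕ) :
    bL L 0 = 1 ∧
    ∀ n : ℕ, bL L (n + 1) =
      ∑ k ∈ Finset.range (n + 1),
        (n.choose k : ℚ) * ((n + 1).choose k : ℚ) ^ L * bL L k := by
  refine ⟨by simp [bL, expPS], fun n => mul_left_cancel₀ (by positivity : (n : ℚ) + 1 ≠ 0) ?_⟩
  calc ((n : ℚ) + 1) * bL L (n + 1)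
      = ((n + 1).factorial : ℚ) ^ (L + 1) * coeff n (d⁄dX ℚ (expPS (hypFsub1 L))) := by
        rw [bL, coeff_derivative]
        ring
    _ = ∑ k ∈ range (n + 1), ((n + 1).factorial : ℚ) ^ (L + 1) *
          coeff (n - k) (d⁄dX ℚ (hypFsub1 L)) * coeff k (expPS (hypFsub1 L)) := by
        rw [derivative_expPS (constantCoeff_hypFsub1 L), coeff_mul_eq_sum_range, mul_sum]
        simp only [mul_assoc]
    _ = ∑ k ∈ range (n + 1),
          (n + 1) * ((n.choose k : ℚ) * ((n + 1).choose k : ℚ) ^ L * bL L k) := by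
        refine sum_congr rfl fun k hk => ?_
        rw [coeff_derivative_hypFsub1, bL, mul_div_assoc',
          factorial_pow_mul_div_eq_choose L (mem_range_succ_iff.mp hk)]
        ring
    _ = ((n : ℚ) + 1) * ∑ k ∈ range (n + 1),
          (n.choose k : ℚ) * ((n + 1).choose k : ℚ) ^ L * bL L k := (mul_sum ..).symm
end

section
/- For every integer L ≥ 0 and every natural number n ≥ 0, S_L(n+1,n) = (n(n+1)/2) · ((n+1)!/2)^L, where the right-hand side is computed in ℚ. -/
open PowerSeries Finset

/-! Since `₀F_L − 1 = z · g` with `g = 1 + z / 2^(L+1) + O(z²)`, the coefficient of `z^(n+1)`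
in `(z · g)^n` is that of `z` in `g^n`, namely `n / 2^(L+1)`. -/

namespace PowerSeries

variable {R : Type*} [CommSemiring R]

theorem coeff_succ_X_mul_pow (g : R⟦X⟧) (n : ℕ) :
    coeff (n + 1) ((X * g) ^ n) = n * coeff 1 g * constantCoeff g ^ (n - 1) := by
  rw [mul_pow, add_comm, coeff_X_pow_mul, coeff_one_pow]

end PowerSeries

theorem hypFsub1_eq_X_mul (L : ℕ) :
    hypFsub1 L = X * PowerSeries.mk fun k => 1 / ((k + 1).factorial : ℚ) ^ (L + 1) := by
  ext (_ | k)
  · simp [hypFsub1]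
  · simp [hypFsub1, coeff_succ_X_mul]

/-- `S_L(n+1,n) = (n(n+1)/2) · ((n+1)!/2)^L`. -/
theorem stmt_10 (L n : ℕ) :
    SL L (n + 1) n =
      ((n : ℚ) * ((n : ℚ) + 1) / 2) * (((n + 1).factorial : ℚ) / 2) ^ L := by
  rw [SL, hypFsub1_eq_X_mul, coeff_succ_X_mul_pow]
  simp only [coeff_mk, ← coeff_zero_eq_constantCoeff_apply, Nat.factorial_succ,
    Nat.factorial_zero]
  push_cast
  simp only [mul_one, div_one, one_pow, mul_pow, div_pow]
  field_simp
  ring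
end

section
/- For every integer L ≥ 0 and every natural number n ≥ 0, S_L(n+2,n) = (n(n+1)(n+2)/24) · ((n+2)!/2)^L · ( 3(n−1)/2^L + 4/3^L ), where the right-hand side is computed in ℚ. -/
open PowerSeries Finset

/-
Since `₀F_L − 1 = z · u` with `u = 1 + z/2^{L+1} + z²/6^{L+1} + …`, the coefficient of `z^{n+2}`
in `(₀F_L − 1)^n` is the coefficient of `z²` in `u^n`, namely
`n/6^{L+1} + C(n,2)/4^{L+1}`; multiplying by `((n+2)!)^{L+1}/n!` and simplifying gives the formula.
-/

section PowOfConstantCoeffOne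

variable {R : Type*} [CommRing R] {f : PowerSeries R}

theorem coeff_zero_pow_of_constantCoeff_eq_one (hf : constantCoeff f = 1) (n : ℕ) :
    coeff 0 (f ^ n) = 1 := by
  simp [hf]

theorem coeff_one_pow_of_constantCoeff_eq_one (hf : constantCoeff f = 1) (n : ℕ) :
    coeff 1 (f ^ n) = n * coeff 1 f := by
  induction n with
  | zero => simp
  | succ n ih =>
    rw [pow_succ, coeff_mul, Nat.sum_antidiagonal_succ, Nat.antidiagonal_zero, sum_singleton]
    have hf0 : coeff 0 f = 1 := by simp [hf]
    simp only [coeff_zero_pow_of_constantCoeff_eq_one hf, hf0, ih]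
    push_cast
    ring

theorem coeff_two_pow_of_constantCoeff_eq_one (hf : constantCoeff f = 1) (n : ℕ) :
    coeff 2 (f ^ n) = n * coeff 2 f + n.choose 2 * coeff 1 f ^ 2 := by
  induction n with
  | zero => simp
  | succ n ih =>
    rw [pow_succ, coeff_mul, Nat.sum_antidiagonal_succ, Nat.sum_antidiagonal_succ,
      Nat.antidiagonal_zero, sum_singleton]
    have hf0 : coeff 0 f = 1 := by simp [hf]
    simp only [coeff_zero_pow_of_constantCoeff_eq_one hf, hf0, ih,
      coeff_one_pow_of_constantCoeff_eq_one hf, Nat.choose_succ_succ, Nat.choose_one_right]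
    push_cast
    ring

end PowOfConstantCoeffOne

noncomputable def hypFsub1DivX (L : ℕ) : PowerSeries ℚ :=
  PowerSeries.mk fun k => 1 / ((k + 1).factorial : ℚ) ^ (L + 1)

theorem hypFsub1_eq_X_mul_s11 (L : ℕ) : hypFsub1 L = X * hypFsub1DivX L := by
  ext (_ | k) <;> simp [hypFsub1, hypFsub1DivX, coeff_succ_X_mul]

theorem coeff_add_two_hypFsub1_pow (L n : ℕ) :
    coeff (n + 2) (hypFsub1 L ^ n) = n / 6 ^ (L + 1) + n.choose 2 / 4 ^ (L + 1) := by
  have hc0 : constantCoeff (hypFsub1DivX L) = 1 := by simp [hypFsub1DivX]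
  have hc1 : coeff 1 (hypFsub1DivX L) = 1 / 2 ^ (L + 1) := by simp [hypFsub1DivX]
  have hc2 : coeff 2 (hypFsub1DivX L) = 1 / 6 ^ (L + 1) := by
    norm_num [hypFsub1DivX, Nat.factorial]
  rw [hypFsub1_eq_X_mul_s11, mul_pow, add_comm, coeff_X_pow_mul,
    coeff_two_pow_of_constantCoeff_eq_one hc0, hc1, hc2, one_div_pow, ← pow_mul, mul_comm _ 2,
    pow_mul]
  norm_num
  ring

/-- `S_L(n+2,n) = (n(n+1)(n+2)/24) · ((n+2)!/2)^L · (3(n−1)/2^L + 4/3^L)`. -/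
theorem stmt_11 (L n : ℕ) :
    SL L (n + 2) n =
      ((n : ℚ) * ((n : ℚ) + 1) * ((n : ℚ) + 2) / 24) *
        (((n + 2).factorial : ℚ) / 2) ^ L *
        (3 * ((n : ℚ) - 1) / 2 ^ L + 4 / 3 ^ L) := by
  have hfac : ((n + 2).factorial : ℚ) = (n + 2) * (n + 1) * n.factorial := by
    push_cast [Nat.factorial_succ]
    ring
  have h6 : (6 : ℚ) ^ (L + 1) = 2 ^ (L + 1) * 3 ^ (L + 1) := by rw [← mul_pow]; norm_num
  have h4 : (4 : ℚ) ^ (L + 1) = 2 ^ (L + 1) * 2 ^ (L + 1) := by rw [← mul_pow]; norm_num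
  rw [SL, coeff_add_two_hypFsub1_pow, Nat.cast_choose_two, hfac, h6, h4]
  have hfac_pos := n.factorial_pos
  simp only [div_pow, mul_pow]
  field_simp
  ring
end

section
/- Let D be the operator on polynomials over ℚ given by D(P) = X · P'. Then for all natural numbers n ≥ l ≥ 1, the conventional Stirling number of the second kind satisfies S_0(n,l) = ((−1)^l / l!) · ( D^n( (1−X)^l − 1 ) evaluated at X = 1 ). -/
open PowerSeries Finset

/-! The Euler operator `D = X · d/dX` is diagonal on monomials, `D (X^m) = m X^m`, so
`(Dⁿ P)(1) = ∑ₘ mⁿ [X^m] P`. For `P = (1 - X)^l - 1` and `n ≥ 1` this is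
`∑ₘ (-1)^m C(l,m) mⁿ`, the constant term being killed by `0ⁿ = 0`. On the other side,
`(e^z - 1)^l = ∑ₘ (-1)^(m+l) C(l,m) e^{mz}` by the binomial theorem, and the `n`-th
coefficient of `e^{mz}` is `mⁿ / n!`. -/

open Nat

namespace Polynomial

variable {R : Type*}

theorem coeff_X_mul_derivative [CommSemiring R] (P : R[X]) (m : ℕ) :
    (X * derivative P).coeff m = m * P.coeff m := by
  cases m with
  | zero => simp
  | succ m => rw [coeff_X_mul, coeff_derivative]; push_cast; ring

theorem coeff_iterate_X_mul_derivative [CommSemiring R] (n : ℕ) (P : R[X]) (m : ℕ) :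
    ((fun P : R[X] => X * derivative P)^[n] P).coeff m = m ^ n * P.coeff m := by
  induction n with
  | zero => simp
  | succ n ih => rw [Function.iterate_succ_apply', coeff_X_mul_derivative, ih]; ring

theorem eval_one_iterate_X_mul_derivative [CommSemiring R] (n : ℕ) {P : R[X]} {N : ℕ}
    (hP : P.natDegree < N) :
    ((fun P : R[X] => X * derivative P)^[n] P).eval 1 = ∑ m ∈ range N, m ^ n * P.coeff m := by
  have hdeg : ((fun P : R[X] => X * derivative P)^[n] P).natDegree < N := by
    refine lt_of_le_of_lt (natDegree_le_iff_coeff_eq_zero.mpr fun k hk => ?_) hP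
    rw [coeff_iterate_X_mul_derivative, coeff_eq_zero_of_natDegree_lt hk, mul_zero]
  simp [eval_eq_sum_range' hdeg, coeff_iterate_X_mul_derivative]

theorem coeff_one_sub_X_pow [CommRing R] (l m : ℕ) :
    ((1 - X : R[X]) ^ l).coeff m = (-1) ^ m * l.choose m := by
  have hterm (k : ℕ) : ((-X : R[X]) ^ k * 1 ^ (l - k) * (l.choose k : R[X])).coeff m =
      if m = k then (-1 : R) ^ m * l.choose m else 0 := by
    rw [one_pow, mul_one, neg_pow, ← C_eq_natCast, mul_comm, ← mul_assoc, ← C_1, ← C_neg, ← C_pow,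
      ← C_mul, coeff_C_mul_X_pow]
    split_ifs with h <;> simp [h, mul_comm]
  rw [sub_eq_neg_add, add_pow, finsetSum_coeff]
  simp only [hterm, sum_ite_eq, mem_range]
  split_ifs with h
  · rfl
  · rw [Nat.choose_eq_zero_of_lt (by omega), Nat.cast_zero, mul_zero]

theorem eval_one_iterate_X_mul_derivative_one_sub_X_pow_sub_one [CommRing R] {n : ℕ} (hn : n ≠ 0)
    (l : ℕ) :
    ((fun P : R[X] => X * derivative P)^[n] ((1 - X) ^ l - 1)).eval 1 =
      ∑ m ∈ range (l + 1), (-1 : R) ^ m * l.choose m * m ^ n := by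
  have hdeg : ((1 - X : R[X]) ^ l - 1).natDegree < l + 1 := by
    refine Nat.lt_succ_of_le ?_
    compute_degree
  rw [eval_one_iterate_X_mul_derivative n hdeg]
  refine sum_congr rfl fun m _ => ?_
  rw [coeff_sub, coeff_one_sub_X_pow, coeff_one]
  rcases eq_or_ne m 0 with rfl | hm
  · simp [hn]
  · rw [if_neg hm, sub_zero]; ring

end Polynomial

theorem hypFsub1_zero : hypFsub1 0 = exp ℚ - 1 := by
  ext k
  cases k with
  | zero => simp [hypFsub1]
  | succ k => simp [hypFsub1, coeff_one]

theorem PowerSeries.coeff_exp_sub_one_pow (A : Type*) [CommRing A] [Algebra ℚ A] (n l : ℕ) :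
    coeff n ((exp A - 1) ^ l) =
      ∑ m ∈ range (l + 1), (-1) ^ (m + l) * l.choose m * m ^ n * algebraMap ℚ A (1 / n !) := by
  rw [sub_pow, map_sum]
  refine sum_congr rfl fun m _ => ?_
  rw [one_pow, mul_one, exp_pow_eq_rescale_exp, mul_comm _ (l.choose m : A⟦X⟧), ← mul_assoc,
    show (l.choose m : A⟦X⟧) * (-1) ^ (m + l) = C ((l.choose m : A) * (-1) ^ (m + l)) by simp,
    coeff_C_mul, coeff_rescale, coeff_exp]
  ring

theorem SL_zero_eq_sum (n l : ℕ) :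
    SL 0 n l = (l ! : ℚ)⁻¹ * ∑ m ∈ range (l + 1), (-1 : ℚ) ^ (m + l) * l.choose m * m ^ n := by
  rw [SL, hypFsub1_zero, coeff_exp_sub_one_pow, mul_sum, mul_sum]
  refine sum_congr rfl fun m _ => ?_
  simp only [Algebra.algebraMap_self, RingHom.id_apply, zero_add, pow_one]
  field_simp

/-- for the Euler operator `D P = X · P'` on `ℚ[X]` and `n ≥ l ≥ 1`,
`S_0(n,l) = ((−1)^l / l!) · (Dⁿ((1 − X)^l − 1))(1)`. -/
theorem stmt_16 (n l : ℕ) (hl : 1 ≤ l) (hln : l ≤ n) :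
    SL 0 n l =
      ((-1 : ℚ) ^ l / (l.factorial : ℚ)) *
        Polynomial.eval 1
          ((fun P : Polynomial ℚ => Polynomial.X * Polynomial.derivative P)^[n]
            ((1 - Polynomial.X) ^ l - 1)) := by
  rw [SL_zero_eq_sum,
    Polynomial.eval_one_iterate_X_mul_derivative_one_sub_X_pow_sub_one (by omega), mul_sum, mul_sum]
  refine sum_congr rfl fun m _ => ?_
  rw [pow_add]
  ring
end
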